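/- arXiv:1701.04790 — 4 statements merged into one kernel-verified Lean document; each statement's English description precedes it below -/
import Mathlib

section
/- For any vertex v in a simple graph G on n vertices with deg(v) ≥ 1, the leverage centrality l(v) = (1/deg(v)) * Σ_{u ∈ N(v)} (deg(v) - deg(u))/(deg(v) + deg(u)) satisfies |l(v)| ≤ 1 - 2/n. -/
/-!
Each summand `(d(v) - d(u)) / (d(v) + d(u))` has absolute value
`1 - 2 min / (d(v) + d(u))`, and since both degrees lie in `[1, n - 1]` we have
`d(v) + d(u) ≤ n · min (d(v), d(u))`; so every summand is bounded by `1 - 2/n`,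
and so is their mean `l(v)`.
-/

open SimpleGraph Finset

/-- Degree of a vertex (classical decidability so arbitrary graphs work). -/
noncomputable def deg {V : Type*} [Fintype V] (G : SimpleGraph V) (v : V) : ℕ :=
  letI : DecidableRel G.Adj := Classical.decRel _
  G.degree v

/-- Neighbor finset of a vertex. -/
noncomputable def nbrs {V : Type*} [Fintype V] (G : SimpleGraph V) (v : V) : Finset V :=
  letI : DecidableRel G.Adj := Classical.decRel _
  G.neighborFinset v

/-- Leverage centrality of a vertex. -/
noncomputable def lev {V : Type*} [Fintype V] (G : SimpleGraph V) (v : V) : ℚ :=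
  (1 / (deg G v : ℚ)) *
    ∑ u ∈ nbrs G v, ((deg G v : ℚ) - (deg G u : ℚ)) / ((deg G v : ℚ) + (deg G u : ℚ))

section Ordered

variable {K : Type*} [Field K] [LinearOrder K] [IsStrictOrderedRing K]

theorem abs_sub_div_add_le_one_sub_two_div {a b n : K} (ha : 1 ≤ a) (hb : 1 ≤ b)
    (han : a + 1 ≤ n) (hbn : b + 1 ≤ n) : |(a - b) / (a + b)| ≤ 1 - 2 / n := by
  have hab : 0 < a + b := by linarith
  have hn : 0 < n := by linarith
  have hmean_le_a : (a + b) / n ≤ a := by rw [div_le_iff₀ hn]; nlinarith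
  have hmean_le_b : (a + b) / n ≤ b := by rw [div_le_iff₀ hn]; nlinarith
  have hrhs : (1 - 2 / n) * (a + b) = a + b - 2 * ((a + b) / n) := by ring
  rw [abs_div, abs_of_pos hab, div_le_iff₀ hab, abs_le, hrhs]
  constructor <;> linarith

theorem abs_mean_le_of_abs_le {ι : Type*} {s : Finset ι} (hs : s.Nonempty) {f : ι → K} {c : K}
    (hf : ∀ i ∈ s, |f i| ≤ c) : |1 / (#s : K) * ∑ i ∈ s, f i| ≤ c := by
  have hcard : (0 : K) < #s := by exact_mod_cast hs.card_pos
  rw [abs_mul, abs_of_pos (by positivity), one_div_mul_eq_div, div_le_iff₀' hcard]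
  calc |∑ i ∈ s, f i| ≤ ∑ i ∈ s, |f i| := abs_sum_le_sum_abs f s
    _ ≤ #s • c := sum_le_card_nsmul s _ c hf
    _ = #s * c := nsmul_eq_mul _ _

end Ordered

section Graph

variable {V : Type*} [Fintype V] (G : SimpleGraph V)

theorem deg_lt_card (v : V) : deg G v < Fintype.card V := by
  classical
  simpa [deg] using G.degree_lt_card_verts v

theorem card_nbrs (v : V) : #(nbrs G v) = deg G v := rfl

theorem deg_pos_of_mem_nbrs {u v : V} (h : u ∈ nbrs G v) : 0 < deg G u := by
  classical
  simp only [nbrs, mem_neighborFinset] at h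
  simpa [deg] using G.degree_pos_iff_exists_adj u |>.mpr ⟨v, h.symm⟩

end Graph

theorem leverage_bound_general {V : Type*} [Fintype V] (G : SimpleGraph V) (v : V)
    (hd : 1 ≤ deg G v) :
    |lev G v| ≤ 1 - 2 / (Fintype.card V : ℚ) := by
  have hnbrs : (nbrs G v).Nonempty := card_pos.mp (card_nbrs G v ▸ hd)
  rw [lev, ← card_nbrs]
  refine abs_mean_le_of_abs_le hnbrs fun u hu => ?_
  rw [card_nbrs]
  have hcard (w : V) : (deg G w : ℚ) + 1 ≤ Fintype.card V := by exact_mod_cast deg_lt_card G w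
  exact abs_sub_div_add_le_one_sub_two_div (by exact_mod_cast hd)
    (by exact_mod_cast deg_pos_of_mem_nbrs G hu) (hcard v) (hcard u)

theorem leverage_bound {V : Type*} [Fintype V] (G : SimpleGraph V) (v : V)
    (hn : 2 ≤ Fintype.card V) (hd : 1 ≤ deg G v) :
    |lev G v| ≤ 1 - 2 / (Fintype.card V : ℚ) :=
  leverage_bound_general G v hd
end

section
/- For any finite simple graph G in which every vertex has positive degree, the sum of leverage centralities over all vertices satisfies Σ_{v ∈ V(G)} l(v) ≤ 0, with equality if and only if every edge of G joins two vertices of equal degree. -/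
open SimpleGraph Finset

lemma mem_nbrs {V : Type*} [Fintype V] (G : SimpleGraph V) (v u : V) :
    u ∈ nbrs G v ↔ G.Adj v u := by
  unfold nbrs
  simp [SimpleGraph.mem_neighborFinset]

lemma key_alg (a b : ℚ) (ha : 0 < a) (hb : 0 < b) :
    (1/a)*((a-b)/(a+b)) + (1/b)*((b-a)/(b+a)) = -(a-b)^2/(a*b*(a+b)) := by
  have hab : a + b ≠ 0 := by positivity
  field_simp
  ring

theorem sum_leverage_nonpos {V : Type*} [Fintype V] (G : SimpleGraph V)
    (hd : ∀ v : V, 1 ≤ deg G v) :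
    (∑ v : V, lev G v) ≤ 0 ∧
      ((∑ v : V, lev G v) = 0 ↔ ∀ u v : V, G.Adj u v → deg G u = deg G v) := by
  classical
  set d : V → ℚ := fun v => (deg G v : ℚ) with hdQ
  have hdpos : ∀ v, 0 < d v := fun v => by
    have := hd v; simp only [hdQ]; exact_mod_cast Nat.lt_of_lt_of_le Nat.zero_lt_one this
  set F : V → V → ℚ := fun v u => (1 / d v) * ((d v - d u) / (d v + d u)) with hF
  set E : Finset (V × V) := Finset.univ.filter (fun p : V × V => G.Adj p.1 p.2) with hE
  -- rewrite each lev as a sum of F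
  have hlev : ∀ v, lev G v = ∑ u ∈ nbrs G v, F v u := by
    intro v
    rw [lev, Finset.mul_sum]
  have hprod : ∀ f : V → V → ℚ,
      (∑ v, ∑ u ∈ nbrs G v, f v u) = ∑ p ∈ E, f p.1 p.2 := by
    intro f
    rw [hE, Finset.sum_filter, Fintype.sum_prod_type]
    refine Finset.sum_congr rfl fun v _ => ?_
    rw [← Finset.sum_filter]
    refine Finset.sum_congr ?_ fun _ _ => rfl
    ext u
    simp [mem_nbrs]
  have hswap : (∑ p ∈ E, F p.1 p.2) = ∑ p ∈ E, F p.2 p.1 := by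
    refine Finset.sum_nbij' (fun p => Prod.swap p) (fun p => Prod.swap p) ?_ ?_ ?_ ?_ ?_
    · intro p hp; simp only [hE, Finset.mem_filter, Finset.mem_univ, true_and] at hp ⊢
      exact hp.symm
    · intro p hp; simp only [hE, Finset.mem_filter, Finset.mem_univ, true_and] at hp ⊢
      exact hp.symm
    · intro p _; rfl
    · intro p _; rfl
    · intro p _; rfl
  have hS : (∑ v : V, lev G v) = ∑ p ∈ E, F p.1 p.2 := by
    rw [Finset.sum_congr rfl fun v _ => hlev v, hprod F]
  have hg : ∀ p ∈ E, F p.1 p.2 + F p.2 p.1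
      = -(d p.1 - d p.2)^2 / (d p.1 * d p.2 * (d p.1 + d p.2)) := by
    intro p _
    exact key_alg _ _ (hdpos p.1) (hdpos p.2)
  have hgle : ∀ p ∈ E, F p.1 p.2 + F p.2 p.1 ≤ 0 := by
    intro p hp
    rw [hg p hp]
    have h1 : (0:ℚ) ≤ (d p.1 - d p.2)^2 := sq_nonneg _
    have h2 : (0:ℚ) < d p.1 * d p.2 * (d p.1 + d p.2) := by
      have := hdpos p.1; have := hdpos p.2; positivity
    have := div_nonneg h1 h2.le
    linarith [this, neg_div (d p.1 * d p.2 * (d p.1 + d p.2)) ((d p.1 - d p.2)^2)]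
  have htwo : 2 * (∑ v : V, lev G v) = ∑ p ∈ E, (F p.1 p.2 + F p.2 p.1) := by
    rw [hS, Finset.sum_add_distrib, ← hswap]; ring
  have hle : (∑ v : V, lev G v) ≤ 0 := by
    have : (∑ p ∈ E, (F p.1 p.2 + F p.2 p.1)) ≤ 0 := Finset.sum_nonpos hgle
    linarith
  refine ⟨hle, ?_, ?_⟩
  · intro hzero u v huv
    have h2 : (∑ p ∈ E, (F p.1 p.2 + F p.2 p.1)) = 0 := by rw [← htwo, hzero]; ring
    have hall := (Finset.sum_eq_zero_iff_of_nonpos hgle).1 h2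
    have hmem : ((u, v) : V × V) ∈ E := by
      simp [hE, huv]
    have := hall (u, v) hmem
    rw [hg _ hmem] at this
    have hden : (0:ℚ) < d u * d v * (d u + d v) := by
      have := hdpos u; have := hdpos v; positivity
    have hnum : (d u - d v)^2 = 0 := by
      field_simp at this
      have hu := hdpos u; have hv := hdpos v
      simp [pow_eq_zero_iff] at this
      rcases this with h | (h | h) | h
      · simp [h]
      · linarith
      · linarith
      · linarith
    have hduv : d u = d v := by
      have := sq_eq_zero_iff.1 hnum; linarith
    simp only [hdQ] at hduv
    exact_mod_cast hduv
  · intro hreg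
    rw [hS]
    refine Finset.sum_eq_zero fun p hp => ?_
    have hadj : G.Adj p.1 p.2 := by
      simpa [hE] using hp
    have : d p.1 = d p.2 := by
      simp only [hdQ]; exact_mod_cast hreg p.1 p.2 hadj
    simp [hF, this]
end

section
/- No finite simple graph with all vertices of positive degree has all n vertices with strictly positive leverage centrality. -/
/-!
The prefactor `1 / deg v` is nonnegative, so positive leverage at `v` forces the inner sum
`∑ u ∈ N(v), (deg v - deg u) / (deg v + deg u)` to be positive. Its terms are antisymmetric in
`(v, u)`, so summed over all vertices they cancel along every edge: the inner sums cannot all be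
positive.
-/

open SimpleGraph Finset

theorem SimpleGraph.sum_sum_neighborFinset_eq_zero_of_antisymm {V M : Type*} [Fintype V]
    [AddCommGroup M] (G : SimpleGraph V) [DecidableRel G.Adj] (f : V → V → M)
    (hf : ∀ u v, f u v = -f v u) :
    ∑ v, ∑ u ∈ G.neighborFinset v, f v u = 0 := by
  rw [sum_sigma']
  refine sum_involution (fun p _ => ⟨p.2, p.1⟩) (fun p _ => by simp [hf p.2 p.1])
    (fun ⟨v, u⟩ hp _ h => ?_) (fun ⟨v, u⟩ hp => ?_) (fun p _ => rfl)
  all_goals simp only [mem_sigma, mem_univ, mem_neighborFinset, true_and] at hp ⊢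
  · exact hp.ne (Sigma.mk.inj_iff.mp h).1.symm
  · exact hp.symm

theorem nbrs_eq_neighborFinset {V : Type*} [Fintype V] (G : SimpleGraph V) [DecidableRel G.Adj]
    (v : V) : nbrs G v = G.neighborFinset v := by
  ext u
  simp [nbrs]

theorem sum_sum_nbrs_leverage_eq_zero {V : Type*} [Fintype V] (G : SimpleGraph V) :
    ∑ v, ∑ u ∈ nbrs G v,
      ((deg G v : ℚ) - (deg G u : ℚ)) / ((deg G v : ℚ) + (deg G u : ℚ)) = 0 := by
  classical
  simp_rw [nbrs_eq_neighborFinset]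
  refine G.sum_sum_neighborFinset_eq_zero_of_antisymm _ fun u v => ?_
  rw [add_comm, ← neg_div, neg_sub]

theorem not_all_positive_leverage_general {V : Type*} [Fintype V] [Nonempty V]
    (G : SimpleGraph V) :
    ¬ (∀ v : V, 0 < lev G v) := by
  intro hpos
  have hnum_pos : ∀ v, 0 < ∑ u ∈ nbrs G v,
      ((deg G v : ℚ) - (deg G u : ℚ)) / ((deg G v : ℚ) + (deg G u : ℚ)) :=
    fun v => pos_of_mul_pos_right (hpos v) (by positivity)
  exact (sum_pos (fun v _ => hnum_pos v) univ_nonempty).ne' (sum_sum_nbrs_leverage_eq_zero G)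

theorem not_all_positive_leverage {V : Type*} [Fintype V] [Nonempty V]
    (G : SimpleGraph V) (hd : ∀ v : V, 1 ≤ deg G v) :
    ¬ (∀ v : V, 0 < lev G v) :=
  not_all_positive_leverage_general G
end

section
/- In ×_m P_n with n ≥ 5, every inner corner vertex (all coordinates in {2, n-1}) has degree 2m, has m neighbors of degree 2m and m neighbors of degree 2m-1, and its leverage centrality equals 1/(8m-2). -/
open SimpleGraph Finset

/-- The lattice `×_m P_n`: Cartesian product of `m` paths on `n` vertices.
Vertices are `m`-tuples of coordinates in `Fin n`; two vertices are adjacent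
iff they differ in exactly one coordinate, by exactly 1. -/
def lattice (m n : ℕ) : SimpleGraph (Fin m → Fin n) where
  Adj v w := ∃ i, ((v i : ℕ) + 1 = (w i : ℕ) ∨ (w i : ℕ) + 1 = (v i : ℕ)) ∧
    ∀ j, j ≠ i → v j = w j
  symm := by
    constructor
    rintro v w ⟨i, h, hj⟩
    exact ⟨i, h.symm, fun j hne => (hj j hne).symm⟩
  loopless := by
    constructor
    rintro v ⟨i, h, -⟩
    omega

lemma deg_eq_card_nbrs {V : Type*} [Fintype V] (G : SimpleGraph V) (v : V) :
    deg G v = #(nbrs G v) := rfl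

def pathNbrs (n : ℕ) (x : Fin n) : Finset (Fin n) :=
  univ.filter fun y => (x : ℕ) + 1 = y ∨ (y : ℕ) + 1 = x

section Path

variable {n : ℕ} {x : Fin n}

lemma mem_pathNbrs {y : Fin n} : y ∈ pathNbrs n x ↔ (x : ℕ) + 1 = y ∨ (y : ℕ) + 1 = x := by
  simp [pathNbrs]

lemma ne_of_mem_pathNbrs {y : Fin n} (h : y ∈ pathNbrs n x) : y ≠ x := by
  rintro rfl
  rw [mem_pathNbrs] at h
  omega

lemma card_pathNbrs_of_interior (h₀ : 0 < (x : ℕ)) (h₁ : (x : ℕ) < n - 1) :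
    #(pathNbrs n x) = 2 := by
  have : pathNbrs n x = {⟨x + 1, by omega⟩, ⟨x - 1, by omega⟩} := by
    ext y
    simp only [mem_pathNbrs, mem_insert, mem_singleton, Fin.ext_iff]
    omega
  rw [this, card_pair (by simp only [ne_eq, Fin.ext_iff]; omega)]

lemma card_pathNbrs_of_boundary (hn : 2 ≤ n) (h : (x : ℕ) = 0 ∨ (x : ℕ) = n - 1) :
    #(pathNbrs n x) = 1 := by
  rw [card_eq_one]
  rcases h with h | h
  · refine ⟨⟨1, by omega⟩, ?_⟩
    ext y; simp only [mem_pathNbrs, mem_singleton, Fin.ext_iff]; omega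
  · refine ⟨⟨n - 2, by omega⟩, ?_⟩
    ext y; simp only [mem_pathNbrs, mem_singleton, Fin.ext_iff]; omega

lemma sum_pathNbrs_of_next_to_end {M : Type*} [AddCommMonoid M] (hn : 4 ≤ n)
    (hx : (x : ℕ) = 1 ∨ (x : ℕ) = n - 2) (g : ℕ → M) :
    ∑ y ∈ pathNbrs n x, g #(pathNbrs n y) = g 1 + g 2 := by
  obtain ⟨a, b, hab, hx_eq, ha, hb₀, hb₁⟩ : ∃ a b : Fin n, a ≠ b ∧ pathNbrs n x = {a, b} ∧
      ((a : ℕ) = 0 ∨ (a : ℕ) = n - 1) ∧ 0 < (b : ℕ) ∧ (b : ℕ) < n - 1 := by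
    rcases hx with hx | hx
    · refine ⟨⟨0, by omega⟩, ⟨2, by omega⟩, by simp [Fin.ext_iff], ?_, by simp, by simp,
        by simp only; omega⟩
      ext y; simp only [mem_pathNbrs, mem_insert, mem_singleton, Fin.ext_iff]; omega
    · refine ⟨⟨n - 1, by omega⟩, ⟨n - 3, by omega⟩, by simp only [ne_eq, Fin.ext_iff]; omega,
        ?_, by simp, by simp only; omega, by simp only; omega⟩
      ext y; simp only [mem_pathNbrs, mem_insert, mem_singleton, Fin.ext_iff]; omega
  rw [hx_eq, sum_pair hab, card_pathNbrs_of_boundary (by omega) ha,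
    card_pathNbrs_of_interior hb₀ hb₁]

end Path

section Lattice

variable {m n : ℕ}

lemma nbrs_lattice (v : Fin m → Fin n) :
    nbrs (lattice m n) v =
      univ.biUnion fun i => (pathNbrs n (v i)).image (Function.update v i) := by
  ext u
  simp only [mem_nbrs, mem_biUnion, mem_image, mem_univ, true_and, mem_pathNbrs]
  constructor
  · rintro ⟨i, hi, hj⟩
    refine ⟨i, u i, hi, funext fun j => ?_⟩
    by_cases hji : j = i
    · subst hji; simp
    · rw [Function.update_of_ne hji]; exact hj j hji
  · rintro ⟨i, y, hy, rfl⟩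
    exact ⟨i, by simpa using hy, fun j hji => (Function.update_of_ne hji _ _).symm⟩

lemma sum_nbrs_lattice {M : Type*} [AddCommMonoid M] (v : Fin m → Fin n)
    (f : (Fin m → Fin n) → M) :
    ∑ u ∈ nbrs (lattice m n) v, f u =
      ∑ i, ∑ y ∈ pathNbrs n (v i), f (Function.update v i y) := by
  rw [nbrs_lattice, sum_biUnion]
  · exact sum_congr rfl fun i _ => sum_image fun a _ b _ h => by simpa using congrFun h i
  · intro i _ j _ hij
    simp only [Function.onFun, Finset.disjoint_left, mem_image]
    rintro u ⟨a, ha, rfl⟩ ⟨b, -, hba⟩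
    have := congrFun hba i
    rw [Function.update_self, Function.update_of_ne hij] at this
    exact ne_of_mem_pathNbrs ha this.symm

lemma deg_lattice (v : Fin m → Fin n) : deg (lattice m n) v = ∑ i, #(pathNbrs n (v i)) := by
  simp only [deg_eq_card_nbrs, card_eq_sum_ones, sum_nbrs_lattice v]

/-- The encoding of the inner corners of `×_m P_n`: coordinates `1` and `n - 2` of `Fin n`
are the vertices `2` and `n - 1` of `P_n = {1, …, n}`. -/
def IsInnerCorner (n : ℕ) (v : Fin m → Fin n) : Prop :=
  ∀ i, (v i : ℕ) = 1 ∨ (v i : ℕ) = n - 2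

variable {v : Fin m → Fin n}

lemma IsInnerCorner.deg_update (hn : 4 ≤ n) (hv : IsInnerCorner n v) (i : Fin m) (y : Fin n) :
    deg (lattice m n) (Function.update v i y) = #(pathNbrs n y) + 2 * (m - 1) := by
  have hcoord : ∀ j, #(pathNbrs n (v j)) = 2 := fun j =>
    card_pathNbrs_of_interior (by rcases hv j with h | h <;> omega)
      (by rcases hv j with h | h <;> omega)
  simp only [deg_lattice, Function.apply_update (fun _ => fun x => #(pathNbrs n x)),
    sum_update_of_mem (mem_univ i), hcoord, sum_const, card_sdiff, card_univ,
    Fintype.card_fin, smul_eq_mul]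
  simp [mul_comm]

theorem IsInnerCorner.sum_nbrs_deg {M : Type*} [AddCommMonoid M] (hn : 4 ≤ n)
    (hv : IsInnerCorner n v) (g : ℕ → M) :
    ∑ u ∈ nbrs (lattice m n) v, g (deg (lattice m n) u) = m • (g (2 * m - 1) + g (2 * m)) := by
  rw [sum_nbrs_lattice]
  calc ∑ i, ∑ y ∈ pathNbrs n (v i), g (deg (lattice m n) (Function.update v i y))
      = ∑ i : Fin m, ∑ y ∈ pathNbrs n (v i), g (#(pathNbrs n y) + 2 * (m - 1)) := by
        simp only [hv.deg_update hn]
    _ = ∑ _i : Fin m, (g (2 * m - 1) + g (2 * m)) := by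
        refine sum_congr rfl fun i _ => ?_
        rw [sum_pathNbrs_of_next_to_end hn (hv i) fun k => g (k + 2 * (m - 1))]
        have := i.pos
        congr 2 <;> omega
    _ = m • (g (2 * m - 1) + g (2 * m)) := by simp

end Lattice

theorem lattice_inner_corner (m n : ℕ) (hm : 1 ≤ m) (hn : 5 ≤ n)
    (v : Fin m → Fin n) (hv : ∀ i, (v i : ℕ) = 1 ∨ (v i : ℕ) = n - 2) :
    deg (lattice m n) v = 2 * m ∧
      ((nbrs (lattice m n) v).filter (fun u => deg (lattice m n) u = 2 * m)).card = m ∧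
      ((nbrs (lattice m n) v).filter (fun u => deg (lattice m n) u = 2 * m - 1)).card = m ∧
      lev (lattice m n) v = 1 / (8 * (m : ℚ) - 2) := by
  have hn : 4 ≤ n := by omega
  have hv : IsInnerCorner n v := hv
  have hdeg : deg (lattice m n) v = 2 * m := by
    have := hv.sum_nbrs_deg hn fun _ => 1
    beta_reduce at this
    rw [deg_eq_card_nbrs, card_eq_sum_ones, this, smul_eq_mul]
    ring
  refine ⟨hdeg, ?_, ?_, ?_⟩
  · have := hv.sum_nbrs_deg hn fun k => if k = 2 * m then 1 else 0
    beta_reduce at this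
    rw [card_filter, this, if_neg (by omega), if_pos rfl, zero_add, smul_eq_mul, mul_one]
  · have := hv.sum_nbrs_deg hn fun k => if k = 2 * m - 1 then 1 else 0
    beta_reduce at this
    rw [card_filter, this, if_pos rfl, if_neg (by omega), add_zero, smul_eq_mul, mul_one]
  · have := hv.sum_nbrs_deg hn fun k => (((2 * m : ℕ) : ℚ) - k) / ((2 * m : ℕ) + k)
    beta_reduce at this
    rw [lev, hdeg, this, nsmul_eq_mul, Nat.cast_sub (by omega)]
    have h4 : (4 : ℚ) * m - 1 ≠ 0 := by
      have : (1 : ℚ) ≤ m := by exact_mod_cast hm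
      linarith
    push_cast
    rw [show (8 : ℚ) * m - 2 = 2 * (4 * m - 1) by ring]
    field_simp
    ring
end
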